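/- arXiv:2512.04882 — 2 statements merged into one kernel-verified Lean document; each statement's English description precedes it below -/
import Mathlib

section
/- Fix real numbers α > 0, β > 0, γ ≠ 0, ε > 0 and a period ℓ > 0; set σ = sgn(γ) ∈ {−1, 1}. Let f : ℝ → ℝ be C¹, F an antiderivative of f, and let U = (u, ψ, w, p) : ℝ × ℝ → ℝ⁴ be twice continuously differentiable, ℓ-periodic in its first (spatial) variable, and satisfy the hyperbolic–parabolic approximate system pointwise: ∂_t u + ∂_x(f(u) + σψ) = ε ∂_x² u, (1/α) ∂_t ψ + ∂_x(f(u) + σψ) = −w + (ε/α) ∂_x² ψ, β ∂_t w − |γ| ∂_x p = ψ, ∂_t p − ∂_x w = ε ∂_x² p. Then for every t, the total entropy t ↦ ∫₀^ℓ E^α(U(x,t)) dx is differentiable with derivative equal to −ε ∫₀^ℓ (σ f'(u(x,t)) (∂_x u(x,t))² + |γ| (∂_x p(x,t))² + (∂_x ψ(x,t))²/α) dx. If moreover σ f'(x) ≥ 0 for all x ∈ ℝ, this derivative is ≤ 0, i.e., the total entropy is nonincreasing in time. -/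
/-- Partial derivative in the first (spatial) variable. -/
noncomputable def pdx (g : ℝ → ℝ → ℝ) (x t : ℝ) : ℝ := deriv (fun y => g y t) x

/-- Partial derivative in the second (temporal) variable. -/
noncomputable def pdt (g : ℝ → ℝ → ℝ) (x t : ℝ) : ℝ := deriv (fun s => g x s) t

/-! Along a solution the entropy obeys the local balance law `∂ₜ E + ∂ₓ Q = -ε D`, obtained by
multiplying the four equations by `σ f(u)`, `ψ`, `w`, `|γ| p` and adding; since `σ² = 1`,
`σ f(u) + ψ = σ (f(u) + σ ψ)`, so the convective terms assemble into `∂ₓ (σ (f(u) + σ ψ)² / 2)`.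
Integrating over one period removes `∂ₓ Q`, and `C¹` regularity lets the time derivative pass
under the integral. -/

open Function

section PartialDerivatives

variable {g : ℝ → ℝ → ℝ}

theorem hasDerivAt_pdx (hg : Differentiable ℝ (uncurry g)) (x t : ℝ) :
    HasDerivAt (fun y => g y t) (pdx g x t) x :=
  ((hg.comp (differentiable_id.prodMk (differentiable_const t))) x).hasDerivAt

theorem hasDerivAt_pdt (hg : Differentiable ℝ (uncurry g)) (x t : ℝ) :
    HasDerivAt (fun s => g x s) (pdt g x t) t :=
  ((hg.comp ((differentiable_const x).prodMk differentiable_id)) t).hasDerivAt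

theorem uncurry_pdx_eq_fderiv (hg : Differentiable ℝ (uncurry g)) :
    uncurry (pdx g) = fun q => fderiv ℝ (uncurry g) q (1, 0) := by
  funext ⟨x, t⟩
  exact ((hg (x, t)).hasFDerivAt.comp_hasDerivAt x
    ((hasDerivAt_id x).prodMk (hasDerivAt_const x t))).deriv

theorem uncurry_pdt_eq_fderiv (hg : Differentiable ℝ (uncurry g)) :
    uncurry (pdt g) = fun q => fderiv ℝ (uncurry g) q (0, 1) := by
  funext ⟨x, t⟩
  exact ((hg (x, t)).hasFDerivAt.comp_hasDerivAt t
    ((hasDerivAt_const t x).prodMk (hasDerivAt_id t))).deriv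

theorem ContDiff.uncurry_pdx {m n : WithTop ℕ∞} (hg : ContDiff ℝ n (uncurry g))
    (hmn : m + 1 ≤ n) : ContDiff ℝ m (uncurry (pdx g)) := by
  rw [uncurry_pdx_eq_fderiv ((hg.of_le (le_add_self.trans hmn)).differentiable one_ne_zero)]
  exact (hg.fderiv_right hmn).clm_apply contDiff_const

theorem ContDiff.uncurry_pdt {m n : WithTop ℕ∞} (hg : ContDiff ℝ n (uncurry g))
    (hmn : m + 1 ≤ n) : ContDiff ℝ m (uncurry (pdt g)) := by
  rw [uncurry_pdt_eq_fderiv ((hg.of_le (le_add_self.trans hmn)).differentiable one_ne_zero)]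
  exact (hg.fderiv_right hmn).clm_apply contDiff_const

theorem pdx_add_period {ℓ : ℝ} (hg : ∀ x t, g (x + ℓ) t = g x t) (x t : ℝ) :
    pdx g (x + ℓ) t = pdx g x t := by
  rw [pdx, ← deriv_comp_add_const]
  simp only [hg]
  rfl

theorem integral_pdx_eq_zero_of_periodic {ℓ : ℝ} (hg : ContDiff ℝ 1 (uncurry g))
    (hper : ∀ x t, g (x + ℓ) t = g x t) (t : ℝ) : ∫ x in (0 : ℝ)..ℓ, pdx g x t = 0 := by
  have hcont : Continuous fun x => pdx g x t :=
    (hg.uncurry_pdx (m := 0) le_rfl).continuous.uncurry_right t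
  rw [intervalIntegral.integral_eq_sub_of_hasDerivAt
    (fun x _ => hasDerivAt_pdx (hg.differentiable one_ne_zero) x t)
    (hcont.intervalIntegrable 0 ℓ),
    ← zero_add ℓ, hper, sub_self]

theorem hasDerivAt_integral_of_contDiff (hg : ContDiff ℝ 1 (uncurry g)) (a b t : ℝ) :
    HasDerivAt (fun s => ∫ x in a..b, g x s) (∫ x in a..b, pdt g x t) t := by
  have hgt : Continuous (uncurry (pdt g)) := (hg.uncurry_pdt (m := 0) le_rfl).continuous
  obtain ⟨M, hM⟩ := ((isCompact_uIcc (a := a) (b := b)).prod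
    (isCompact_closedBall t 1)).exists_bound_of_continuousOn hgt.continuousOn
  refine (intervalIntegral.hasDerivAt_integral_of_dominated_loc_of_deriv_le
    (bound := fun _ => M) (Metric.ball_mem_nhds t one_pos)
    (.of_forall fun s => (hg.continuous.uncurry_right s).aestronglyMeasurable)
    ((hg.continuous.uncurry_right t).intervalIntegrable a b)
    (hgt.uncurry_right t).aestronglyMeasurable
    (.of_forall fun x hx s hs =>
      hM (x, s) ⟨Set.uIoc_subset_uIcc hx, Metric.ball_subset_closedBall hs⟩)
    intervalIntegrable_const
    (.of_forall fun x _ s _ => hasDerivAt_pdt (hg.differentiable one_ne_zero) x s)).2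

theorem integral_pdt_eq_of_balance {e Q : ℝ → ℝ → ℝ} {S : ℝ → ℝ} {ℓ t : ℝ}
    (he : ContDiff ℝ 1 (uncurry e)) (hQ : ContDiff ℝ 1 (uncurry Q))
    (hper : ∀ x t, Q (x + ℓ) t = Q x t) (hbal : ∀ x, pdt e x t + pdx Q x t = S x) :
    ∫ x in (0 : ℝ)..ℓ, pdt e x t = ∫ x in (0 : ℝ)..ℓ, S x := by
  have het : Continuous fun x => pdt e x t :=
    (he.uncurry_pdt (m := 0) le_rfl).continuous.uncurry_right t
  have hQx : Continuous fun x => pdx Q x t :=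
    (hQ.uncurry_pdx (m := 0) le_rfl).continuous.uncurry_right t
  calc ∫ x in (0 : ℝ)..ℓ, pdt e x t
      = (∫ x in (0 : ℝ)..ℓ, pdt e x t) + ∫ x in (0 : ℝ)..ℓ, pdx Q x t := by
        rw [integral_pdx_eq_zero_of_periodic hQ hper t, add_zero]
    _ = ∫ x in (0 : ℝ)..ℓ, pdt e x t + pdx Q x t :=
        (intervalIntegral.integral_add (het.intervalIntegrable 0 ℓ)
          (hQx.intervalIntegrable 0 ℓ)).symm
    _ = ∫ x in (0 : ℝ)..ℓ, S x := intervalIntegral.integral_congr fun x _ => hbal x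

end PartialDerivatives

noncomputable section

def entropy (α β γ σ : ℝ) (F : ℝ → ℝ) (u ψ w p : ℝ → ℝ → ℝ) (x t : ℝ) : ℝ :=
  σ * F (u x t) + |γ| * p x t ^ 2 / 2 + ψ x t ^ 2 / (2 * α) + β * w x t ^ 2 / 2

def entropyFlux (α γ ε σ : ℝ) (f : ℝ → ℝ) (u ψ w p : ℝ → ℝ → ℝ) (x t : ℝ) : ℝ :=
  σ * (f (u x t) + σ * ψ x t) ^ 2 / 2 - |γ| * w x t * p x t
    - ε * (σ * f (u x t) * pdx u x t + ψ x t * pdx ψ x t / α + |γ| * p x t * pdx p x t)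

def dissipation (α γ σ : ℝ) (f : ℝ → ℝ) (u ψ p : ℝ → ℝ → ℝ) (x t : ℝ) : ℝ :=
  σ * deriv f (u x t) * pdx u x t ^ 2 + |γ| * pdx p x t ^ 2 + pdx ψ x t ^ 2 / α

end

section EntropyBalance

variable {α β γ ε σ ℓ : ℝ} {f F : ℝ → ℝ} {u ψ w p : ℝ → ℝ → ℝ}

theorem contDiff_entropy (hf : Continuous f) (hF : ∀ x, HasDerivAt F (f x) x)
    (hu : ContDiff ℝ 1 (uncurry u)) (hψ : ContDiff ℝ 1 (uncurry ψ))
    (hw : ContDiff ℝ 1 (uncurry w)) (hp : ContDiff ℝ 1 (uncurry p)) :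
    ContDiff ℝ 1 (uncurry (entropy α β γ σ F u ψ w p)) := by
  have hF1 : ContDiff ℝ 1 F := contDiff_one_iff_deriv.2
    ⟨fun x => (hF x).differentiableAt, by rwa [funext fun x => (hF x).deriv]⟩
  change ContDiff ℝ 1 fun q => σ * F (uncurry u q) + |γ| * uncurry p q ^ 2 / 2
    + uncurry ψ q ^ 2 / (2 * α) + β * uncurry w q ^ 2 / 2
  fun_prop

theorem contDiff_entropyFlux (hf : ContDiff ℝ 1 f)
    (hu : ContDiff ℝ 2 (uncurry u)) (hψ : ContDiff ℝ 2 (uncurry ψ))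
    (hw : ContDiff ℝ 1 (uncurry w)) (hp : ContDiff ℝ 2 (uncurry p)) :
    ContDiff ℝ 1 (uncurry (entropyFlux α γ ε σ f u ψ w p)) := by
  have hux := hu.uncurry_pdx (m := 1) (by norm_num)
  have hψx := hψ.uncurry_pdx (m := 1) (by norm_num)
  have hpx := hp.uncurry_pdx (m := 1) (by norm_num)
  have hu1 : ContDiff ℝ 1 (uncurry u) := hu.of_le (by norm_num)
  have hψ1 : ContDiff ℝ 1 (uncurry ψ) := hψ.of_le (by norm_num)
  have hp1 : ContDiff ℝ 1 (uncurry p) := hp.of_le (by norm_num)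
  change ContDiff ℝ 1 fun q => σ * (f (uncurry u q) + σ * uncurry ψ q) ^ 2 / 2
    - |γ| * uncurry w q * uncurry p q
    - ε * (σ * f (uncurry u q) * uncurry (pdx u) q + uncurry ψ q * uncurry (pdx ψ) q / α
      + |γ| * uncurry p q * uncurry (pdx p) q)
  fun_prop

theorem entropyFlux_add_period (hu : ∀ x t, u (x + ℓ) t = u x t)
    (hψ : ∀ x t, ψ (x + ℓ) t = ψ x t) (hw : ∀ x t, w (x + ℓ) t = w x t)
    (hp : ∀ x t, p (x + ℓ) t = p x t) (x t : ℝ) :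
    entropyFlux α γ ε σ f u ψ w p (x + ℓ) t = entropyFlux α γ ε σ f u ψ w p x t := by
  simp only [entropyFlux, hu, hψ, hw, hp, pdx_add_period hu, pdx_add_period hψ,
    pdx_add_period hp]

theorem hasDerivAt_entropy_time (hF : ∀ x, HasDerivAt F (f x) x)
    (hu : Differentiable ℝ (uncurry u)) (hψ : Differentiable ℝ (uncurry ψ))
    (hw : Differentiable ℝ (uncurry w)) (hp : Differentiable ℝ (uncurry p)) (x t : ℝ) :
    HasDerivAt (fun s => entropy α β γ σ F u ψ w p x s)
      (σ * f (u x t) * pdt u x t + |γ| * p x t * pdt p x t + ψ x t * pdt ψ x t / α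
        + β * w x t * pdt w x t) t := by
  have hFu := (hF (u x t)).comp t (hasDerivAt_pdt hu x t)
  have hp2 := (hasDerivAt_pdt hp x t).fun_pow 2
  have hψ2 := (hasDerivAt_pdt hψ x t).fun_pow 2
  have hw2 := (hasDerivAt_pdt hw x t).fun_pow 2
  refine ((((hFu.const_mul σ).add ((hp2.const_mul |γ|).div_const 2)).add
    (hψ2.div_const (2 * α))).add ((hw2.const_mul β).div_const 2)).congr_deriv ?_
  push_cast
  ring

theorem hasDerivAt_flux (hf : Differentiable ℝ f) (hu : Differentiable ℝ (uncurry u))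
    (hψ : Differentiable ℝ (uncurry ψ)) (x t : ℝ) :
    HasDerivAt (fun y => f (u y t) + σ * ψ y t)
      (deriv f (u x t) * pdx u x t + σ * pdx ψ x t) x :=
  ((hf _).hasDerivAt.comp x (hasDerivAt_pdx hu x t)).add ((hasDerivAt_pdx hψ x t).const_mul σ)

theorem hasDerivAt_entropyFlux_space (hf : Differentiable ℝ f)
    (hu : ContDiff ℝ 2 (uncurry u)) (hψ : ContDiff ℝ 2 (uncurry ψ))
    (hw : Differentiable ℝ (uncurry w)) (hp : ContDiff ℝ 2 (uncurry p)) (x t : ℝ) :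
    HasDerivAt (fun y => entropyFlux α γ ε σ f u ψ w p y t)
      (σ * (f (u x t) + σ * ψ x t) * (deriv f (u x t) * pdx u x t + σ * pdx ψ x t)
        - |γ| * (pdx w x t * p x t + w x t * pdx p x t)
        - ε * (σ * (deriv f (u x t) * pdx u x t ^ 2 + f (u x t) * pdx (pdx u) x t)
          + (pdx ψ x t ^ 2 + ψ x t * pdx (pdx ψ) x t) / α
          + |γ| * (pdx p x t ^ 2 + p x t * pdx (pdx p) x t))) x := by
  have hdx {g : ℝ → ℝ → ℝ} (hg : ContDiff ℝ 2 (uncurry g)) :=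
    hasDerivAt_pdx (hg.differentiable two_ne_zero) x t
  have hdxx {g : ℝ → ℝ → ℝ} (hg : ContDiff ℝ 2 (uncurry g)) :=
    hasDerivAt_pdx ((hg.uncurry_pdx (m := 1) (by norm_num)).differentiable one_ne_zero) x t
  have hconv := (((hasDerivAt_flux hf (hu.differentiable two_ne_zero)
    (hψ.differentiable two_ne_zero) x t (σ := σ)).fun_pow 2).const_mul σ).div_const 2
  have hwave := ((hasDerivAt_pdx hw x t).const_mul |γ|).mul (hdx hp)
  have hfu : HasDerivAt (fun y => f (u y t)) (deriv f (u x t) * pdx u x t) x :=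
    (hf _).hasDerivAt.comp x (hdx hu)
  have hvisc := (((hfu.const_mul σ).mul (hdxx hu)).add
    (((hdx hψ).mul (hdxx hψ)).div_const α)).add (((hdx hp).const_mul |γ|).mul (hdxx hp))
  refine ((hconv.sub hwave).sub (hvisc.const_mul ε)).congr_deriv ?_
  push_cast
  ring

theorem entropy_balance (hσ : σ * σ = 1) (hf : Differentiable ℝ f)
    (hF : ∀ x, HasDerivAt F (f x) x)
    (hu : ContDiff ℝ 2 (uncurry u)) (hψ : ContDiff ℝ 2 (uncurry ψ))
    (hw : Differentiable ℝ (uncurry w)) (hp : ContDiff ℝ 2 (uncurry p))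
    (heq1 : ∀ x t, pdt u x t + pdx (fun y s => f (u y s) + σ * ψ y s) x t
      = ε * pdx (pdx u) x t)
    (heq2 : ∀ x t, (1 / α) * pdt ψ x t + pdx (fun y s => f (u y s) + σ * ψ y s) x t
      = -w x t + (ε / α) * pdx (pdx ψ) x t)
    (heq3 : ∀ x t, β * pdt w x t - |γ| * pdx p x t = ψ x t)
    (heq4 : ∀ x t, pdt p x t - pdx w x t = ε * pdx (pdx p) x t) (x t : ℝ) :
    pdt (entropy α β γ σ F u ψ w p) x t + pdx (entropyFlux α γ ε σ f u ψ w p) x t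
      = -(ε * dissipation α γ σ f u ψ p x t) := by
  have hud := hu.differentiable two_ne_zero
  have hψd := hψ.differentiable two_ne_zero
  have hGx := (hasDerivAt_flux hf hud hψd x t (σ := σ)).deriv
  have e1 := heq1 x t
  have e2 := heq2 x t
  rw [pdx, hGx] at e1 e2
  rw [pdt, (hasDerivAt_entropy_time hF hud hψd hw (hp.differentiable two_ne_zero) x t).deriv,
    pdx, (hasDerivAt_entropyFlux_space hf hu hψ hw hp x t).deriv, dissipation]
  linear_combination σ * f (u x t) * e1 + ψ x t * e2 + w x t * heq3 x t
    + |γ| * p x t * heq4 x t + ψ x t * (deriv f (u x t) * pdx u x t + σ * pdx ψ x t) * hσ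

theorem dissipation_nonneg (hα : 0 < α) (hf : ∀ y, 0 ≤ σ * deriv f y) (x t : ℝ) :
    0 ≤ dissipation α γ σ f u ψ p x t := by
  unfold dissipation
  have := hf (u x t)
  positivity

end EntropyBalance

theorem total_entropy_dissipation_periodic_general
    (α β γ ε ℓ σ : ℝ) (hα : 0 < α) (hγ : γ ≠ 0) (hε : 0 < ε) (hℓ : 0 < ℓ)
    (hσ : σ = Real.sign γ)
    (f F : ℝ → ℝ) (hf : ContDiff ℝ 1 f) (hF : ∀ x, HasDerivAt F (f x) x)
    (u ψ w p : ℝ → ℝ → ℝ)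
    (hu : ContDiff ℝ 2 (Function.uncurry u)) (hψ : ContDiff ℝ 2 (Function.uncurry ψ))
    (hw : ContDiff ℝ 2 (Function.uncurry w)) (hp : ContDiff ℝ 2 (Function.uncurry p))
    (hup : ∀ x t, u (x + ℓ) t = u x t) (hψp : ∀ x t, ψ (x + ℓ) t = ψ x t)
    (hwp : ∀ x t, w (x + ℓ) t = w x t) (hpp : ∀ x t, p (x + ℓ) t = p x t)
    (heq1 : ∀ x t, pdt u x t + pdx (fun y s => f (u y s) + σ * ψ y s) x t
      = ε * pdx (pdx u) x t)
    (heq2 : ∀ x t, (1 / α) * pdt ψ x t + pdx (fun y s => f (u y s) + σ * ψ y s) x t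
      = -w x t + (ε / α) * pdx (pdx ψ) x t)
    (heq3 : ∀ x t, β * pdt w x t - |γ| * pdx p x t = ψ x t)
    (heq4 : ∀ x t, pdt p x t - pdx w x t = ε * pdx (pdx p) x t) :
    ∀ t : ℝ,
      HasDerivAt
        (fun s => ∫ x in (0:ℝ)..ℓ,
          (σ * F (u x s) + |γ| * (p x s) ^ 2 / 2 + (ψ x s) ^ 2 / (2 * α)
            + β * (w x s) ^ 2 / 2))
        (-(ε * ∫ x in (0:ℝ)..ℓ,
          (σ * deriv f (u x t) * (pdx u x t) ^ 2 + |γ| * (pdx p x t) ^ 2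
            + (pdx ψ x t) ^ 2 / α))) t ∧
      ((∀ y : ℝ, 0 ≤ σ * deriv f y) →
        -(ε * ∫ x in (0:ℝ)..ℓ,
          (σ * deriv f (u x t) * (pdx u x t) ^ 2 + |γ| * (pdx p x t) ^ 2
            + (pdx ψ x t) ^ 2 / α)) ≤ 0) := by
  intro t
  have hσ2 : σ * σ = 1 := by
    rcases Real.sign_apply_eq_of_ne_zero γ hγ with h | h <;> simp [hσ, h]
  have hE : ContDiff ℝ 1 (uncurry (entropy α β γ σ F u ψ w p)) :=
    contDiff_entropy hf.continuous hF (hu.of_le (by norm_num)) (hψ.of_le (by norm_num))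
      (hw.of_le (by norm_num)) (hp.of_le (by norm_num))
  have hQ : ContDiff ℝ 1 (uncurry (entropyFlux α γ ε σ f u ψ w p)) :=
    contDiff_entropyFlux hf hu hψ (hw.of_le (by norm_num)) hp
  have hbal := entropy_balance hσ2 (hf.differentiable one_ne_zero) hF hu hψ
    (hw.differentiable two_ne_zero) hp heq1 heq2 heq3 heq4 (t := t)
  refine ⟨?_, fun hpos => ?_⟩
  · have hder := hasDerivAt_integral_of_contDiff hE 0 ℓ t
    rwa [integral_pdt_eq_of_balance hE hQ (entropyFlux_add_period hup hψp hwp hpp) hbal,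
      intervalIntegral.integral_neg, intervalIntegral.integral_const_mul] at hder
  · exact neg_nonpos.2 (mul_nonneg hε.le
      (intervalIntegral.integral_nonneg hℓ.le fun x _ => dissipation_nonneg hα hpos x t))

/-- for an `ℓ`-periodic `C²` solution `U = (u, ψ, w, p)` of the
hyperbolic–parabolic approximate system, the total entropy `t ↦ ∫₀^ℓ E^α(U(x,t)) dx` is
differentiable with derivative
`-ε ∫₀^ℓ (σ f'(u) u_x² + |γ| p_x² + ψ_x²/α) dx`; if moreover `σ f' ≥ 0` everywhere, this
derivative is `≤ 0`, so the total entropy is nonincreasing. -/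
theorem total_entropy_dissipation_periodic
    (α β γ ε ℓ σ : ℝ) (hα : 0 < α) (hβ : 0 < β) (hγ : γ ≠ 0) (hε : 0 < ε) (hℓ : 0 < ℓ)
    (hσ : σ = Real.sign γ)
    (f F : ℝ → ℝ) (hf : ContDiff ℝ 1 f) (hF : ∀ x, HasDerivAt F (f x) x)
    (u ψ w p : ℝ → ℝ → ℝ)
    (hu : ContDiff ℝ 2 (Function.uncurry u)) (hψ : ContDiff ℝ 2 (Function.uncurry ψ))
    (hw : ContDiff ℝ 2 (Function.uncurry w)) (hp : ContDiff ℝ 2 (Function.uncurry p))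
    (hup : ∀ x t, u (x + ℓ) t = u x t) (hψp : ∀ x t, ψ (x + ℓ) t = ψ x t)
    (hwp : ∀ x t, w (x + ℓ) t = w x t) (hpp : ∀ x t, p (x + ℓ) t = p x t)
    (heq1 : ∀ x t, pdt u x t + pdx (fun y s => f (u y s) + σ * ψ y s) x t
      = ε * pdx (pdx u) x t)
    (heq2 : ∀ x t, (1 / α) * pdt ψ x t + pdx (fun y s => f (u y s) + σ * ψ y s) x t
      = -w x t + (ε / α) * pdx (pdx ψ) x t)
    (heq3 : ∀ x t, β * pdt w x t - |γ| * pdx p x t = ψ x t)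
    (heq4 : ∀ x t, pdt p x t - pdx w x t = ε * pdx (pdx p) x t) :
    ∀ t : ℝ,
      HasDerivAt
        (fun s => ∫ x in (0:ℝ)..ℓ,
          (σ * F (u x s) + |γ| * (p x s) ^ 2 / 2 + (ψ x s) ^ 2 / (2 * α)
            + β * (w x s) ^ 2 / 2))
        (-(ε * ∫ x in (0:ℝ)..ℓ,
          (σ * deriv f (u x t) * (pdx u x t) ^ 2 + |γ| * (pdx p x t) ^ 2
            + (pdx ψ x t) ^ 2 / α))) t ∧
      ((∀ y : ℝ, 0 ≤ σ * deriv f y) →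
        -(ε * ∫ x in (0:ℝ)..ℓ,
          (σ * deriv f (u x t) * (pdx u x t) ^ 2 + |γ| * (pdx p x t) ^ 2
            + (pdx ψ x t) ^ 2 / α)) ≤ 0) :=
  total_entropy_dissipation_periodic_general α β γ ε ℓ σ hα hγ hε hℓ hσ f F hf hF u ψ w p hu hψ hw
    hp hup hψp hwp hpp heq1 heq2 heq3 heq4
end

section
/- Fix real numbers α > 0, β > 0, γ ≠ 0; set σ = sgn(γ) ∈ {−1, 1} and v = √(|γ|/β). Let f : ℝ → ℝ be differentiable. For every U = (u, ψ, w, p) ∈ ℝ⁴, the matrix product S₀(u) A(u) is a symmetric 4×4 matrix, where S₀(u) = diag(σ f'(u), 1/α, β, |γ|) is the Hessian of the entropy E^α at U and A(u) is the flux Jacobian; explicitly, S₀(u) A(u) has rows (σ f'(u)², f'(u), 0, 0), (f'(u), σ, 0, 0), (0, 0, 0, −|γ|), (0, 0, −|γ|, 0). In particular, the Hessian of the entropy symmetrizes the hyperbolic approximate system. -/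
/-! Since `S₀` is diagonal, `S₀ A` just rescales the rows of `A`; the off-diagonal entries then
pair up because `σ² = 1` and `β v² = |γ|`. -/

noncomputable def fluxJacobian (α σ v : ℝ) (f : ℝ → ℝ) (u : ℝ) : Matrix (Fin 4) (Fin 4) ℝ :=
  !![deriv f u,     σ,     0, 0;
     α * deriv f u, α * σ, 0, 0;
     0,             0,     0, -v ^ 2;
     0,             0,     -1, 0]

theorem Real.sign_mul_self_of_ne_zero {r : ℝ} (hr : r ≠ 0) : Real.sign r * Real.sign r = 1 := by
  nth_rw 2 [← Real.inv_sign]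
  exact mul_inv_cancel₀ (Real.sign_eq_zero_iff.not.mpr hr)

theorem diagonal_mul_fluxJacobian (a b c d α σ v : ℝ) (f : ℝ → ℝ) (u : ℝ) :
    Matrix.diagonal ![a, b, c, d] * fluxJacobian α σ v f u
      = !![a * deriv f u,       a * σ,       0,  0;
           b * (α * deriv f u), b * (α * σ), 0,  0;
           0,                   0,           0,  -(c * v ^ 2);
           0,                   0,           -d, 0] := by
  ext i j
  fin_cases i <;> fin_cases j <;> simp [fluxJacobian, Matrix.diagonal_mul]

theorem Matrix.isSymm_of_fin_four_blocks {R : Type*} [Zero R] (a b c d : R) :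
    (!![a, b, 0, 0;
        b, c, 0, 0;
        0, 0, 0, d;
        0, 0, d, 0] : Matrix (Fin 4) (Fin 4) R).IsSymm := by
  ext i j
  fin_cases i <;> fin_cases j <;> rfl

theorem entropyHessian_mul_fluxJacobian {α β γ σ v : ℝ} (hα : α ≠ 0) (hβ : 0 < β)
    (hσ : σ * σ = 1) (hv : v = Real.sqrt (|γ| / β)) (f : ℝ → ℝ) (u : ℝ) :
    Matrix.diagonal ![σ * deriv f u, 1 / α, β, |γ|] * fluxJacobian α σ v f u
      = !![σ * (deriv f u) ^ 2, deriv f u, 0, 0;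
           deriv f u,           σ,         0, 0;
           0,                   0,         0, -|γ|;
           0,                   0,         -|γ|, 0] := by
  have hβv : β * v ^ 2 = |γ| := by
    rw [hv, Real.sq_sqrt (by positivity), mul_div_cancel₀ _ hβ.ne']
  have hσf : σ * deriv f u * σ = deriv f u := by linear_combination deriv f u * hσ
  rw [diagonal_mul_fluxJacobian, hβv, hσf, mul_assoc, ← sq, one_div,
    inv_mul_cancel_left₀ hα, inv_mul_cancel_left₀ hα]

theorem entropy_hessian_symmetrizes_general
    (α β γ σ v : ℝ) (hα : 0 < α) (hβ : 0 < β) (hγ : γ ≠ 0)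
    (hσ : σ = Real.sign γ) (hv : v = Real.sqrt (|γ| / β))
    (f : ℝ → ℝ) (u : ℝ) :
    (Matrix.diagonal ![σ * deriv f u, 1 / α, β, |γ|] * fluxJacobian α σ v f u).IsSymm ∧
    Matrix.diagonal ![σ * deriv f u, 1 / α, β, |γ|] * fluxJacobian α σ v f u
      = !![σ * (deriv f u) ^ 2, deriv f u, 0, 0;
           deriv f u,           σ,         0, 0;
           0,                   0,         0, -|γ|;
           0,                   0,         -|γ|, 0] := by
  have hproduct := entropyHessian_mul_fluxJacobian hα.ne' hβ
    (hσ ▸ Real.sign_mul_self_of_ne_zero hγ) hv f u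
  exact ⟨hproduct ▸ Matrix.isSymm_of_fin_four_blocks _ _ _ _, hproduct⟩

/-- the Hessian `S₀(u) = diag(σ f'(u), 1/α, β, |γ|)` of the entropy
symmetrizes the hyperbolic approximate system: `S₀(u) A(u)` is symmetric, with rows
`(σ f'(u)², f'(u), 0, 0)`, `(f'(u), σ, 0, 0)`, `(0, 0, 0, -|γ|)`, `(0, 0, -|γ|, 0)`. -/
theorem entropy_hessian_symmetrizes
    (α β γ σ v : ℝ) (hα : 0 < α) (hβ : 0 < β) (hγ : γ ≠ 0)
    (hσ : σ = Real.sign γ) (hv : v = Real.sqrt (|γ| / β))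
    (f : ℝ → ℝ) (hf : Differentiable ℝ f) (u ψ w p : ℝ) :
    (Matrix.diagonal ![σ * deriv f u, 1 / α, β, |γ|] * fluxJacobian α σ v f u).IsSymm ∧
    Matrix.diagonal ![σ * deriv f u, 1 / α, β, |γ|] * fluxJacobian α σ v f u
      = !![σ * (deriv f u) ^ 2, deriv f u, 0, 0;
           deriv f u,           σ,         0, 0;
           0,                   0,         0, -|γ|;
           0,                   0,         -|γ|, 0] :=
  entropy_hessian_symmetrizes_general α β γ σ v hα hβ hγ hσ hv f u
end
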